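/- Product formula for Legendre polynomials via Chebyshev expansion: P_j(cos θ) = ∑_{l=0}^{j} g_l g_{j−l} cos((j−2l)θ), where g_l = (2l)!/(4^l·(l!)²); in particular all coefficients g_l g_{j−l} are positive. -/

import Mathlib

/-!
Both sides satisfy Bonnet's recurrence `(n + 2) P_{n+2} = (2n + 3) x P_{n+1} - (n + 1) P_n`
and agree for `n = 0, 1`. For the explicit formula, `Γ(1/2 + r) = g_r r! Γ(1/2)` turns the
coefficients into `(-1)^m g_{n-m} C(n-m, m)`, and the recurrence becomes an identity between
binomial coefficients. For the trigonometric sum it follows from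
`2 cos θ cos kθ = cos (k+1)θ + cos (k-1)θ` and `(2l + 2) g_{l+1} = (2l + 1) g_l`.
-/

open Finset Real
/-- The Gegenbauer (ultraspherical) polynomial `C_n^ν(x)`, via its standard explicit formula. -/
noncomputable def gegenbauer (ν : ℝ) (n : ℕ) (x : ℝ) : ℝ :=
  ∑ m ∈ Finset.range (n / 2 + 1),
    (-1 : ℝ) ^ m * Real.Gamma (ν + (n : ℝ) - m) /
      (Real.Gamma ν * (m.factorial : ℝ) * ((n - 2 * m).factorial : ℝ)) *
        (2 * x) ^ (n - 2 * m)

/-- The Legendre polynomial `P_n = C_n^{1/2}`. -/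
noncomputable def legendre (n : ℕ) (x : ℝ) : ℝ := gegenbauer (1 / 2) n x


/-- The coefficients `g_l = (2l)!/(4^l (l!)²)`. -/
noncomputable def g (l : ℕ) : ℝ := ((2 * l).factorial : ℝ) / (4 ^ l * (l.factorial : ℝ) ^ 2)

lemma g_pos (l : ℕ) : 0 < g l := by
  unfold g
  positivity

lemma g_zero : g 0 = 1 := by
  simp [g]

lemma g_succ (l : ℕ) : g (l + 1) = (2 * l + 1) / (2 * l + 2) * g l := by
  simp only [g, show 2 * (l + 1) = 2 * l + 1 + 1 by ring, Nat.factorial_succ]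
  push_cast
  field_simp
  ring

lemma g_one : g 1 = 1 / 2 := by
  norm_num [g_succ 0, g_zero]

lemma Gamma_one_half_add_nat (r : ℕ) : Gamma (1 / 2 + r) = g r * r.factorial * Gamma (1 / 2) := by
  induction r with
  | zero => simp [g_zero]
  | succ r ih =>
    rw [Nat.cast_succ, ← add_assoc, Gamma_add_one (by positivity), ih, g_succ, Nat.factorial_succ]
    push_cast
    field_simp
    ring

/-- The binomial coefficient makes this vanish for `2 * m > n`, so sums over it may run over any
range past `n / 2`. -/
noncomputable def legendreCoeff (n m : ℕ) : ℝ := (-1) ^ m * g (n - m) * (n - m).choose m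

lemma legendreCoeff_zero (n : ℕ) : legendreCoeff n 0 = g n := by
  simp [legendreCoeff]

lemma legendreCoeff_eq_zero {n m : ℕ} (h : n < 2 * m) : legendreCoeff n m = 0 := by
  simp [legendreCoeff, Nat.choose_eq_zero_of_lt (show n - m < m by omega)]

lemma gegenbauer_one_half_coeff {n m : ℕ} (h : 2 * m ≤ n) :
    (-1 : ℝ) ^ m * Gamma (1 / 2 + (n : ℝ) - m) /
      (Gamma (1 / 2) * (m.factorial : ℝ) * ((n - 2 * m).factorial : ℝ)) =
      legendreCoeff n m := by
  have hGamma : Gamma (1 / 2 + (n : ℝ) - m) = g (n - m) * (n - m).factorial * Gamma (1 / 2) := by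
    rw [← Gamma_one_half_add_nat, Nat.cast_sub (by omega), add_sub_assoc]
  rw [hGamma, legendreCoeff, Nat.cast_choose ℝ (by omega : m ≤ n - m),
    show n - m - m = n - 2 * m by omega]
  have : Gamma (1 / 2) ≠ 0 := (Gamma_pos_of_pos one_half_pos).ne'
  field_simp

lemma legendre_eq_sum_legendreCoeff {n N : ℕ} (hN : n / 2 < N) (x : ℝ) :
    legendre n x = ∑ m ∈ range N, legendreCoeff n m * (2 * x) ^ (n - 2 * m) := by
  rw [legendre, gegenbauer]
  refine sum_subset_zero_on_sdiff (range_subset_range.2 hN) (fun m hm => ?_) (fun m hm => ?_)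
  · rw [mem_sdiff, mem_range, mem_range] at hm
    rw [legendreCoeff_eq_zero (by omega), zero_mul]
  · rw [gegenbauer_one_half_coeff (by rw [mem_range] at hm; omega)]

lemma legendreCoeff_succ_succ (n m : ℕ) :
    (n + 2 : ℝ) * legendreCoeff (n + 2) (m + 1) =
      (2 * n + 3) / 2 * legendreCoeff (n + 1) (m + 1) - (n + 1) * legendreCoeff n m := by
  rcases lt_or_ge n (2 * m) with h | h
  · simp [legendreCoeff_eq_zero h, legendreCoeff_eq_zero (show n + 1 < 2 * (m + 1) by omega),
      legendreCoeff_eq_zero (show n + 2 < 2 * (m + 1) by omega)]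
  obtain ⟨k, rfl⟩ := Nat.exists_eq_add_of_le h
  simp only [legendreCoeff, show 2 * m + k + 2 - (m + 1) = m + k + 1 by omega,
    show 2 * m + k + 1 - (m + 1) = m + k by omega, show 2 * m + k - m = m + k by omega]
  have hm : (m + 1 : ℝ) ≠ 0 := by positivity
  have hC₁ : ((m + k + 1).choose (m + 1) : ℝ) = (m + k + 1) / (m + 1) * (m + k).choose m := by
    rw [eq_comm, div_mul_eq_mul_div, div_eq_iff hm]
    exact_mod_cast Nat.add_one_mul_choose_eq (m + k) m
  have hC₂ : ((m + k).choose (m + 1) : ℝ) = k / (m + 1) * (m + k).choose m := by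
    rw [div_mul_eq_mul_div, eq_div_iff hm]
    exact_mod_cast (Nat.choose_succ_right_eq (m + k) m).trans
      (by rw [Nat.add_sub_cancel_left, mul_comm])
  rw [hC₁, hC₂, g_succ]
  push_cast
  field_simp
  ring

lemma legendre_term_succ_succ (n m : ℕ) (x : ℝ) :
    (n + 2 : ℝ) * (legendreCoeff (n + 2) (m + 1) * (2 * x) ^ (n + 2 - 2 * (m + 1))) =
      (2 * n + 3) * x * (legendreCoeff (n + 1) (m + 1) * (2 * x) ^ (n + 1 - 2 * (m + 1))) -
        (n + 1) * (legendreCoeff n m * (2 * x) ^ (n - 2 * m)) := by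
  have hcoeff := legendreCoeff_succ_succ n m
  rw [show n + 2 - 2 * (m + 1) = n - 2 * m by omega]
  rcases lt_or_ge n (2 * m + 1) with h | h
  · rw [legendreCoeff_eq_zero (show n + 1 < 2 * (m + 1) by omega)] at hcoeff ⊢
    linear_combination (2 * x) ^ (n - 2 * m) * hcoeff
  · rw [show n - 2 * m = n + 1 - 2 * (m + 1) + 1 by omega, pow_succ]
    linear_combination (2 * x) ^ (n + 1 - 2 * (m + 1)) * (2 * x) * hcoeff

theorem legendre_succ_succ (n : ℕ) (x : ℝ) :
    (n + 2 : ℝ) * legendre (n + 2) x =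
      (2 * n + 3) * x * legendre (n + 1) x - (n + 1) * legendre n x := by
  rw [legendre_eq_sum_legendreCoeff (N := n + 3) (by omega),
    legendre_eq_sum_legendreCoeff (N := n + 3) (by omega),
    legendre_eq_sum_legendreCoeff (N := n + 2) (by omega),
    sum_range_succ' _ (n + 2), sum_range_succ' _ (n + 2), mul_add, mul_add,
    mul_sum, mul_sum, mul_sum,
    sum_congr rfl fun m _ => legendre_term_succ_succ n m x, sum_sub_distrib]
  have hlead : (n + 2 : ℝ) * (legendreCoeff (n + 2) 0 * (2 * x) ^ (n + 2 - 2 * 0)) =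
      (2 * n + 3) * x * (legendreCoeff (n + 1) 0 * (2 * x) ^ (n + 1 - 2 * 0)) := by
    rw [legendreCoeff_zero, legendreCoeff_zero, g_succ (n + 1)]
    push_cast
    field_simp
    ring
  rw [hlead]
  ring

noncomputable def gCosSum (n : ℕ) (θ : ℝ) : ℝ :=
  ∑ p ∈ antidiagonal n, g p.1 * g p.2 * cos (((p.2 : ℝ) - p.1) * θ)

lemma sum_range_eq_gCosSum (n : ℕ) (θ : ℝ) :
    ∑ l ∈ range (n + 1), g l * g (n - l) * cos (((n : ℝ) - 2 * l) * θ) = gCosSum n θ := by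
  rw [gCosSum,
    Nat.sum_antidiagonal_eq_sum_range_succ fun a b => g a * g b * cos (((b : ℝ) - a) * θ)]
  refine sum_congr rfl fun l hl => ?_
  rw [Nat.cast_sub (by rw [mem_range] at hl; omega)]
  ring_nf

lemma g_mul_g_succ_succ (a b : ℕ) :
    (a + b + 2 : ℝ) * (g (a + 1) * g (b + 1)) =
      (2 * (a + b) + 3) / 2 * (g (a + 1) * g b + g a * g (b + 1)) - (a + b + 1) * (g a * g b) := by
  rw [g_succ a, g_succ b]
  field_simp
  ring

lemma gCosSum_add_two (n : ℕ) (θ : ℝ) :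
    gCosSum (n + 2) θ = 2 * g (n + 2) * cos ((n + 2) * θ) +
      ∑ p ∈ antidiagonal n, g (p.1 + 1) * g (p.2 + 1) * cos (((p.2 : ℝ) - p.1) * θ) := by
  rw [gCosSum, Nat.sum_antidiagonal_succ, Nat.sum_antidiagonal_succ']
  simp only [g_zero]
  push_cast
  rw [show ((0 : ℝ) - (n + 1 + 1)) * θ = -((n + 2) * θ) by ring, cos_neg]
  ring_nf

lemma two_mul_cos_mul_gCosSum_add_one (n : ℕ) (θ : ℝ) :
    2 * cos θ * gCosSum (n + 1) θ = 2 * g (n + 1) * cos ((n + 2) * θ) +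
      ∑ p ∈ antidiagonal n,
        (g (p.1 + 1) * g p.2 + g p.1 * g (p.2 + 1)) * cos (((p.2 : ℝ) - p.1) * θ) := by
  have hprod : ∀ a b : ℝ, 2 * cos θ * cos ((b - a) * θ) =
      cos ((b + 1 - a) * θ) + cos ((b - (a + 1)) * θ) := fun a b => by
    rw [show (b + 1 - a) * θ = (b - a) * θ + θ by ring,
      show (b - (a + 1)) * θ = (b - a) * θ - θ by ring, cos_add, cos_sub]
    ring
  have hsplit : 2 * cos θ * gCosSum (n + 1) θ =
      ∑ p ∈ antidiagonal (n + 1), g p.1 * g p.2 * cos (((p.2 : ℝ) + 1 - p.1) * θ) +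
        ∑ p ∈ antidiagonal (n + 1), g p.1 * g p.2 * cos (((p.2 : ℝ) - (p.1 + 1)) * θ) := by
    rw [gCosSum, mul_sum, ← sum_add_distrib]
    refine sum_congr rfl fun p _ => ?_
    rw [mul_left_comm, hprod]
    ring
  rw [hsplit, Nat.sum_antidiagonal_succ, Nat.sum_antidiagonal_succ', add_add_add_comm,
    ← sum_add_distrib]
  simp only [g_zero]
  push_cast
  congr 1
  · rw [← cos_neg ((0 - _) * θ)]
    ring_nf
  · refine sum_congr rfl fun p _ => ?_
    ring_nf

lemma gCosSum_succ_succ (n : ℕ) (θ : ℝ) :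
    (n + 2 : ℝ) * gCosSum (n + 2) θ =
      (2 * n + 3) * cos θ * gCosSum (n + 1) θ - (n + 1) * gCosSum n θ := by
  rw [mul_assoc _ (cos θ), show (2 * n + 3 : ℝ) = (2 * n + 3) / 2 * 2 by ring, mul_assoc _ 2,
    ← mul_assoc 2, two_mul_cos_mul_gCosSum_add_one, gCosSum_add_two, gCosSum, mul_add, mul_add,
    mul_sum, mul_sum, mul_sum, add_sub_assoc, ← sum_sub_distrib]
  congr 1
  · rw [g_succ (n + 1)]
    push_cast
    field_simp
    ring
  · refine sum_congr rfl fun p hp => ?_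
    rw [HasAntidiagonal.mem_antidiagonal] at hp
    rw [← hp]
    push_cast
    linear_combination cos (((p.2 : ℝ) - p.1) * θ) * g_mul_g_succ_succ p.1 p.2

theorem legendre_cos_eq_gCosSum (n : ℕ) (θ : ℝ) : legendre n (cos θ) = gCosSum n θ := by
  induction n using Nat.twoStepInduction with
  | zero => simp [legendre_eq_sum_legendreCoeff (N := 1), legendreCoeff_zero, gCosSum, g_zero]
  | one =>
    rw [legendre_eq_sum_legendreCoeff (N := 1) (by norm_num), gCosSum, Nat.sum_antidiagonal_succ]
    norm_num [legendreCoeff_zero, g_zero, g_one]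
    ring
  | more n ih₀ ih₁ =>
    refine mul_left_cancel₀ (by positivity : (n + 2 : ℝ) ≠ 0) ?_
    rw [legendre_succ_succ, gCosSum_succ_succ, ih₀, ih₁]

/-- Product formula: `P_j(cos θ) = ∑_{l=0}^j g_l g_{j-l} cos((j-2l)θ)`, with all
coefficients `g_l g_{j-l}` positive. -/
theorem legendre_cos_expansion (j : ℕ) (θ : ℝ) :
    legendre j (Real.cos θ) =
        ∑ l ∈ Finset.range (j + 1), g l * g (j - l) * Real.cos (((j : ℝ) - 2 * l) * θ) ∧
      ∀ l : ℕ, l ≤ j → 0 < g l * g (j - l) :=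
  ⟨by rw [sum_range_eq_gCosSum, legendre_cos_eq_gCosSum],
    fun l _ => mul_pos (g_pos l) (g_pos (j - l))⟩
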